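/- Let A = {a_1,…,a_m} be a finite subset of ℕ^n with m ≥ 1, where n = n_1 + … + n_p for nonnegative integers n_1,…,n_p (p ≥ 1), and write a_i = (a_{i1},…,a_{in}). For 0 ≤ l ≤ m let Γ(l,m) be the set of all l-element subsets of {1,…,m}; for σ ∈ Γ(l,m) let ā_{σj} = max{a_{ij} : i ∈ σ} for 1 ≤ j ≤ n, and let b_{σj} = Σ_{h ∈ N_j} ā_{σh} for 1 ≤ j ≤ p, where N_j is the j-th block of indices determined by the partition. Then the dimension polynomial of A satisfies ω_A(t_1,…,t_p) = Σ_{l=0}^{m} (-1)^l Σ_{σ ∈ Γ(l,m)} ∏_{j=1}^{p} C(t_j + n_j − b_{σj}, n_j). -/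

import Mathlib

open MvPolynomial

/-- A polynomial in `p` variables with rational coefficients is numerical if it takes
integer values for all sufficiently large integer arguments. -/
def IsNumerical {p : ℕ} (f : MvPolynomial (Fin p) ℚ) : Prop :=
  ∃ s : Fin p → ℤ, ∀ r : Fin p → ℤ, (∀ i, s i ≤ r i) →
    ∃ z : ℤ, MvPolynomial.eval (fun i => (r i : ℚ)) f = (z : ℚ)

/-- The binomial-coefficient polynomial `C(t_j + c, k)` in the variable `t_j`. -/
noncomputable def binomShift {p : ℕ} (j : Fin p) (c : ℤ) (k : ℕ) : MvPolynomial (Fin p) ℚ :=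
  (k.factorial : ℚ)⁻¹ • ∏ l ∈ Finset.range k, (X j + MvPolynomial.C ((c : ℚ) - (l : ℚ)))

/-- The sum of the entries of `v` over the `j`-th block of the partition `B`. -/
def blockSum {n p : ℕ} (B : Fin n → Fin p) (v : Fin n → ℕ) (j : Fin p) : ℕ :=
  ∑ i ∈ Finset.univ.filter (fun i => B i = j), v i

/-- `V_A`: the set of points of `ℕ^n` that are not ≥ (componentwise) any element of `A`. -/
def VSet {n : ℕ} (A : Set (Fin n → ℕ)) : Set (Fin n → ℕ) :=
  {v | ∀ a ∈ A, ¬ a ≤ v}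

/-!
By inclusion–exclusion over the generators, the points of `V_A` whose block sums are at most
`r` number `∑_σ (-1)^|σ| · #{v ≥ ā_σ | block sums of v ≤ r}`. Translating by `ā_σ` turns the
`σ`-term into the number of points with block sums at most `r_j - b_σj`, which by stars and bars
is `∏_j C(r_j - b_σj + n_j, n_j)`: the value of the right-hand side at `r` once `r_j ≥ b_σj`.
Two polynomials over `ℚ` that agree on a translate of `ℕ^p` are equal.
-/

open Finset

theorem Finset.card_filter_forall_not_eq_sum_powerset {α ι : Type*} [Fintype ι]
    (Q : Finset α) (P : ι → α → Prop) [∀ i, DecidablePred (P i)] :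
    (#{x ∈ Q | ∀ i, ¬ P i x} : ℤ) =
      ∑ σ ∈ univ.powerset, (-1 : ℤ) ^ #σ * #{x ∈ Q | ∀ i ∈ σ, P i x} := by
  classical
  have card_filter_univ (R : α → Prop) [DecidablePred R] : #{x : Q | R x} = #{x ∈ Q | R x} := by
    rw [← card_map (Function.Embedding.subtype _)]
    congr 1
    ext x
    simp [and_comm]
  convert inclusion_exclusion_card_inf_compl (α := Q) univ (fun i => {x : Q | P i x}) using 3 <;>
    rw [← card_filter_univ] <;> congr 2 <;> ext <;> simp [Finset.mem_inf]

theorem natCard_sum_le_eq_choose (ι : Type*) [Fintype ι] (R : ℕ) :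
    Nat.card {w : ι → ℕ // ∑ i, w i ≤ R} = (R + Fintype.card ι).choose (Fintype.card ι) := by
  classical
  -- a slack variable turns `∑ w ≤ R` into `∑ w = R`, i.e. into a multiset of size `R`
  let slack : {w : ι → ℕ // ∑ i, w i ≤ R} ≃ {w : Option ι → ℕ // ∑ i, w i = R} :=
    { toFun w := ⟨fun o => o.elim (R - ∑ i, w.1 i) w.1, by
        simp [Fintype.sum_option, Nat.sub_add_cancel w.2]⟩
      invFun w := ⟨fun i => w.1 (some i),
        (Nat.le_add_left _ _).trans_eq ((Fintype.sum_option _).symm.trans w.2)⟩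
      left_inv w := rfl
      right_inv w := by
        ext (_ | i)
        · have := w.2
          rw [Fintype.sum_option] at this
          simp only [Option.elim_none]
          omega
        · rfl }
  rw [Nat.card_congr (slack.trans (Sym.equivNatSumOfFintype _ R).symm), Nat.card_eq_fintype_card,
    Sym.card_sym_eq_choose, Fintype.card_option, Nat.add_right_comm, Nat.add_sub_cancel,
    ← Nat.choose_symm_add, add_comm]

lemma factorial_mul_ringChoose_eq_prod {R : Type*} [CommRing R] [BinomialRing R] (y : R) (k : ℕ) :
    k.factorial * Ring.choose y k = ∏ l ∈ range k, (y - l) := by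
  rw [← descPochhammer_eval_eq_prod_range, ← nsmul_eq_mul,
    ← Ring.descPochhammer_eq_factorial_smul_choose, ← descPochhammer_map (Int.castRingHom R),
    Polynomial.eval_map, ← Polynomial.eval₂_smulOneHom_eq_smeval]
  congr 1
  exact RingHom.ext_int _ _

lemma eval_binomShift {p : ℕ} (x : Fin p → ℚ) (j : Fin p) (c : ℤ) (k : ℕ) :
    eval x (binomShift j c k) = Ring.choose (x j + c) k := by
  rw [binomShift, smul_eval, map_prod, inv_mul_eq_iff_eq_mul₀ (by positivity),
    factorial_mul_ringChoose_eq_prod]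
  simp only [map_add, eval_X, eval_C, add_sub_assoc]

lemma eval_binomShift_natCast {p : ℕ} (r : Fin p → ℕ) (j : Fin p) {b : ℕ} (hb : b ≤ r j) (k : ℕ) :
    eval (fun i => (r i : ℚ)) (binomShift j ((k : ℤ) - b) k) = ((r j - b + k).choose k : ℚ) := by
  rw [eval_binomShift, ← Ring.choose_natCast]
  push_cast [hb]
  ring_nf

theorem MvPolynomial.eq_of_eval_natCast_of_le {σ R : Type*} [CommRing R] [IsDomain R] [CharZero R]
    {f g : MvPolynomial σ R} (s : σ → ℕ)
    (h : ∀ r : σ → ℕ, (∀ i, s i ≤ r i) →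
      eval (fun i => (r i : R)) f = eval (fun i => (r i : R)) g) :
    f = g := by
  refine funext_set (fun i => Nat.cast '' Set.Ici (s i))
    (fun i => (Set.Ici_infinite _).image Nat.cast_injective.injOn) fun x hx => ?_
  choose r hr hrx using fun i => hx i (Set.mem_univ i)
  obtain rfl : x = fun i => (r i : R) := _root_.funext fun i => (hrx i).symm
  exact h r hr

section Blocks

variable {n p : ℕ} (B : Fin n → Fin p)

lemma blockSum_eq_sum_fiber (v : Fin n → ℕ) (j : Fin p) :
    blockSum B v j = ∑ i : {i // B i = j}, v i :=
  sum_subtype _ (by simp) v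

lemma le_blockSum (v : Fin n → ℕ) (i : Fin n) : v i ≤ blockSum B v (B i) :=
  single_le_sum (fun _ _ => Nat.zero_le _) (by simp)

lemma blockSum_add (u v : Fin n → ℕ) (j : Fin p) :
    blockSum B (u + v) j = blockSum B u j + blockSum B v j :=
  sum_add_distrib

lemma blockSum_mono {u v : Fin n → ℕ} (h : u ≤ v) (j : Fin p) : blockSum B u j ≤ blockSum B v j :=
  sum_le_sum fun i _ => h i

theorem natCard_blockSum_le (r : Fin p → ℕ) :
    Nat.card {v : Fin n → ℕ // ∀ j, blockSum B v j ≤ r j} =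
      ∏ j, (r j + #{i | B i = j}).choose #{i | B i = j} := by
  let curry : (Fin n → ℕ) ≃ ∀ j, {i // B i = j} → ℕ :=
    ((Equiv.sigmaFiberEquiv B).symm.arrowCongr (Equiv.refl ℕ)).trans
      (Equiv.piCurry fun _ _ => ℕ)
  let e : {v // ∀ j, blockSum B v j ≤ r j} ≃ ∀ j, {w : {i // B i = j} → ℕ // ∑ i, w i ≤ r j} :=
    (curry.subtypeEquiv fun v => by simp only [blockSum_eq_sum_fiber]; rfl).trans
      Equiv.subtypePiEquivPi
  rw [Nat.card_congr e, Nat.card_pi]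
  simp only [natCard_sum_le_eq_choose, Fintype.card_subtype]

-- The bound `Iic` only makes the set a `Finset`: it follows from the block sums (`mem_blockBox`).
def blockBox (r : Fin p → ℕ) : Finset (Fin n → ℕ) :=
  {v ∈ Iic fun i => r (B i) | ∀ j, blockSum B v j ≤ r j}

@[simp]
lemma mem_blockBox {r : Fin p → ℕ} {v : Fin n → ℕ} :
    v ∈ blockBox B r ↔ ∀ j, blockSum B v j ≤ r j := by
  simp only [blockBox, mem_filter, mem_Iic, and_iff_right_iff_imp]
  exact fun h i => (le_blockSum B v i).trans (h _)

theorem card_blockBox (r : Fin p → ℕ) :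
    #(blockBox B r) = ∏ j, (r j + #{i | B i = j}).choose #{i | B i = j} := by
  rw [← natCard_blockSum_le, ← Nat.card_eq_finsetCard]
  exact Nat.card_congr (Equiv.subtypeEquivRight fun _ => mem_blockBox B)

open scoped Classical in
theorem card_filter_le_blockBox {r : Fin p → ℕ} (c : Fin n → ℕ)
    (hc : ∀ j, blockSum B c j ≤ r j) :
    #{v ∈ blockBox B r | c ≤ v} = #(blockBox B fun j => r j - blockSum B c j) := by
  refine card_nbij' (· - c) (· + c) (fun v hv => ?_) (fun w hw => ?_)
    (fun v hv => tsub_add_cancel_of_le (mem_filter.1 hv).2) (fun w _ => add_tsub_cancel_right w c)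
  · simp only [mem_coe, mem_filter, mem_blockBox] at hv ⊢
    intro j
    have hsplit := blockSum_add B (v - c) c j
    rw [tsub_add_cancel_of_le hv.2] at hsplit
    have := hv.1 j
    omega
  · simp only [mem_coe, mem_filter, mem_blockBox] at hw ⊢
    refine ⟨fun j => ?_, le_add_self⟩
    have := hw j
    have := hc j
    rw [blockSum_add]
    omega

lemma blockSum_sup {ι : Type*} (σ : Finset ι) (a : ι → Fin n → ℕ) (j : Fin p) :
    blockSum B (σ.sup a) j = ∑ h ∈ univ.filter (fun h => B h = j), σ.sup fun i => a i h := by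
  simp only [blockSum, Finset.sup_apply]

theorem ncard_VSet_range_blockSum_le {ι : Type*} [Fintype ι] (a : ι → Fin n → ℕ)
    {r : Fin p → ℕ} (hr : ∀ (σ : Finset ι) j, blockSum B (σ.sup a) j ≤ r j) :
    (({v ∈ VSet (Set.range a) | ∀ j, blockSum B v j ≤ r j} : Set _).ncard : ℤ) =
      ∑ σ ∈ univ.powerset, (-1 : ℤ) ^ #σ *
        ∏ j, ((r j - blockSum B (σ.sup a) j + #{i | B i = j}).choose #{i | B i = j} : ℤ) := by
  classical
  have hfin : {v ∈ VSet (Set.range a) | ∀ j, blockSum B v j ≤ r j} =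
      ↑({v ∈ blockBox B r | ∀ i, ¬ a i ≤ v} : Finset _) := by
    ext v
    simp [VSet, and_comm]
  rw [hfin, Set.ncard_coe_finset, card_filter_forall_not_eq_sum_powerset]
  refine sum_congr rfl fun σ _ => ?_
  simp_rw [← Finset.sup_le_iff]
  rw [card_filter_le_blockBox B _ (hr σ), card_blockBox]
  push_cast
  rfl

end Blocks

theorem statement_4_general (p n m : ℕ) (nn : Fin p → ℕ) (B : Fin n → Fin p)
    (hBcard : ∀ j, (Finset.univ.filter fun i => B i = j).card = nn j)
    (a : Fin m → Fin n → ℕ) (ω : MvPolynomial (Fin p) ℚ)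
    (hagree : ∃ s : Fin p → ℕ, ∀ r : Fin p → ℕ, (∀ i, s i ≤ r i) →
      MvPolynomial.eval (fun i => ((r i : ℤ) : ℚ)) ω =
        (({v ∈ VSet (Set.range a) | ∀ j, blockSum B v j ≤ r j} : Set (Fin n → ℕ)).ncard : ℚ)) :
    ω = ∑ σ ∈ (Finset.univ : Finset (Fin m)).powerset, ((-1 : ℚ) ^ σ.card) •
          ∏ j, binomShift j
            ((nn j : ℤ) -
              ((∑ h ∈ Finset.univ.filter (fun h => B h = j), σ.sup (fun i => a i h) : ℕ) : ℤ))
            (nn j) := by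
  obtain ⟨s, hs⟩ := hagree
  refine eq_of_eval_natCast_of_le (fun j => max (s j) (blockSum B (univ.sup a) j)) fun r hr => ?_
  have hr_sup (σ : Finset (Fin m)) j : blockSum B (σ.sup a) j ≤ r j :=
    (blockSum_mono B (sup_mono (subset_univ σ)) j).trans ((le_max_right _ _).trans (hr j))
  have hω := hs r fun j => (le_max_left _ _).trans (hr j)
  simp only [Int.cast_natCast] at hω
  rw [hω, ← Int.cast_natCast (R := ℚ), ncard_VSet_range_blockSum_le B a hr_sup, map_sum]
  simp only [← hBcard, ← blockSum_sup]
  push_cast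
  refine sum_congr rfl fun σ _ => ?_
  simp only [smul_eval, map_prod, eval_binomShift_natCast r _ (hr_sup σ _)]

theorem statement_4 (p n m : ℕ) (hp : 1 ≤ p) (hm : 1 ≤ m)
    (nn : Fin p → ℕ) (hn : ∑ j, nn j = n)
    (B : Fin n → Fin p) (hBmono : Monotone B)
    (hBcard : ∀ j, (Finset.univ.filter fun i => B i = j).card = nn j)
    (a : Fin m → Fin n → ℕ)
    (ω : MvPolynomial (Fin p) ℚ) (hω : IsNumerical ω)
    (hagree : ∃ s : Fin p → ℕ, ∀ r : Fin p → ℕ, (∀ i, s i ≤ r i) →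
      MvPolynomial.eval (fun i => ((r i : ℤ) : ℚ)) ω =
        (({v ∈ VSet (Set.range a) | ∀ j, blockSum B v j ≤ r j} : Set (Fin n → ℕ)).ncard : ℚ)) :
    ω = ∑ σ ∈ (Finset.univ : Finset (Fin m)).powerset, ((-1 : ℚ) ^ σ.card) •
          ∏ j, binomShift j
            ((nn j : ℤ) -
              ((∑ h ∈ Finset.univ.filter (fun h => B h = j), σ.sup (fun i => a i h) : ℕ) : ℤ))
            (nn j) :=
  statement_4_general p n m nn B hBcard a ω hagree
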